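/- arXiv:1604.04413 — 5 statements merged into one kernel-verified Lean document; each statement's English description precedes it below -/
import Mathlib

section
/- Fix an integer γ with gcd(γ, q) = 1 and u₁ ∈ Z_q. For divisors d₁, d₂ ∈ D_q and residues r₁ ∈ Z_{d₁}, r₂ ∈ Z_{d₂}, define V⁰([r₁]_{d₁}, [r₂]_{d₂} ∣ u₁) := Σ_{u₂ ∈ Z_q} (1/q) · V([r₁]_{d₁} ∣ u₁ + γ·u₂ mod q) · V([r₂]_{d₂} ∣ u₂). Then for every d ∈ D_q and r ∈ Z_d: Σ_{d₁, d₂ ∈ D_q with gcd(d₁,d₂) = d} Σ_{(r₁,r₂) ∈ Z_{d₁} × Z_{d₂} with r₁ − γ·r₂ ≡ r (mod d)} V⁰([r₁]_{d₁}, [r₂]_{d₂} ∣ u₁) equals Σ_{(d₁,d₂) ∈ D_q × D_q, gcd(d₁,d₂) = d} ε_{d₁}·ε_{d₂} if u₁ ≡ r (mod d), and equals 0 otherwise. -/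
open Finset

/-- The generalized erasure channel `V = V_(q)(ε_d : d ∈ D_q)`:
the probability of output symbol `[r]_d` given input `x` is `ε d` if
`x ≡ r (mod d)`, and `0` otherwise. -/
noncomputable def Vch (ε : ℕ → ℝ) (d r : ℕ) (x : ℤ) : ℝ :=
  if x % (d : ℤ) = (r : ℤ) % (d : ℤ) then ε d else 0

/-- The minus polar transform
`V⁰([r₁]_{d₁}, [r₂]_{d₂} ∣ u₁) = Σ_{u₂ ∈ Z_q} (1/q) · V([r₁]_{d₁} ∣ u₁ + γ·u₂ mod q) · V([r₂]_{d₂} ∣ u₂)`. -/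
noncomputable def V0 (q : ℕ) (γ : ℤ) (ε : ℕ → ℝ) (d₁ r₁ d₂ r₂ u₁ : ℕ) : ℝ :=
  ∑ u₂ ∈ range q,
    (1 / (q : ℝ)) * Vch ε d₁ r₁ (((u₁ : ℤ) + γ * (u₂ : ℤ)) % (q : ℤ)) * Vch ε d₂ r₂ (u₂ : ℤ)

/-
For a fixed `u₂`, each factor `V(· ∣ x)` of `V⁰` restricted to the residues modulo `dᵢ` is a point
mass of weight `ε_{dᵢ}` at `x mod dᵢ`. So the double sum over `(r₁, r₂)` keeps only
`r₁ = (u₁ + γ u₂) mod d₁`, `r₂ = u₂ mod d₂`, and since `d` divides `d₁`, `d₂` and `q`, the constraint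
`r₁ − γ r₂ ≡ r (mod d)` becomes `u₁ ≡ r (mod d)`, independently of `u₂`. Averaging over `u₂`
then gives `ε_{d₁} ε_{d₂}` or `0`, and it remains to sum over the pairs `(d₁, d₂)`.
-/

lemma Vch_eq_ite (ε : ℕ → ℝ) {d r : ℕ} (hr : r < d) (x : ℤ) :
    Vch ε d r x = if r = (x % d).toNat then ε d else 0 := by
  have hd : (d : ℤ) ≠ 0 := by omega
  have hx : ((x % d).toNat : ℤ) = x % d := Int.toNat_of_nonneg (Int.emod_nonneg x hd)
  have hr' : (r : ℤ) % d = r := Int.emod_eq_of_lt (by omega) (by omega)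
  unfold Vch
  rw [hr', ← hx]
  exact if_congr (by omega) rfl rfl

lemma sum_range_Vch_mul (ε : ℕ → ℝ) {d : ℕ} (hd : 0 < d) (x : ℤ) (f : ℕ → ℝ) :
    ∑ r ∈ range d, Vch ε d r x * f r = ε d * f (x % d).toNat := by
  have hmem : (x % d).toNat ∈ range d := by
    rw [mem_range]
    have := Int.emod_lt_of_pos x (by omega : (0 : ℤ) < d)
    omega
  rw [sum_congr rfl fun r hr => by rw [Vch_eq_ite ε (mem_range.mp hr), ite_mul, zero_mul],
    sum_ite_eq', if_pos hmem]

lemma Vch_emod_of_dvd (ε : ℕ → ℝ) {d q : ℕ} (h : d ∣ q) (r : ℕ) (x : ℤ) :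
    Vch ε d r (x % q) = Vch ε d r x := by
  unfold Vch
  rw [Int.emod_emod_of_dvd x (Int.natCast_dvd_natCast.mpr h)]

lemma toNat_emod_modEq {d₁ d : ℕ} (hd₁ : 0 < d₁) (h : d ∣ d₁) (x : ℤ) :
    ((x % d₁).toNat : ℤ) ≡ x [ZMOD d] := by
  rw [Int.toNat_of_nonneg (Int.emod_nonneg x (by omega))]
  exact Int.emod_emod_of_dvd x (Int.natCast_dvd_natCast.mpr h)

lemma sum_filter_Vch_mul_Vch (ε : ℕ → ℝ) (γ : ℤ) {d d₁ d₂ : ℕ} (r : ℕ)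
    (hd₁ : 0 < d₁) (hd₂ : 0 < d₂) (h₁ : d ∣ d₁) (h₂ : d ∣ d₂) (x y : ℤ) :
    ∑ r₁ ∈ range d₁, ∑ r₂ ∈ (range d₂).filter
        (fun r₂ : ℕ => ((r₁ : ℤ) - γ * (r₂ : ℤ)) % (d : ℤ) = (r : ℤ) % (d : ℤ)),
      Vch ε d₁ r₁ x * Vch ε d₂ r₂ y
      = if x - γ * y ≡ r [ZMOD d] then ε d₁ * ε d₂ else 0 := by
  set a₁ := (x % d₁).toNat
  set a₂ := (y % d₂).toNat
  have hcong : ((a₁ : ℤ) - γ * a₂) ≡ x - γ * y [ZMOD d] :=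
    (toNat_emod_modEq hd₁ h₁ x).sub ((toNat_emod_modEq hd₂ h₂ y).mul_left γ)
  calc _ = ∑ r₁ ∈ range d₁, Vch ε d₁ r₁ x * ∑ r₂ ∈ range d₂, Vch ε d₂ r₂ y *
          (if ((r₁ : ℤ) - γ * r₂) ≡ r [ZMOD d] then 1 else 0) := by
        simp only [sum_filter, mul_sum, mul_ite, mul_one, mul_zero]
        rfl
    _ = ε d₁ * (ε d₂ * if ((a₁ : ℤ) - γ * a₂) ≡ r [ZMOD d] then 1 else 0) := by
        simp only [sum_range_Vch_mul ε hd₂, sum_range_Vch_mul ε hd₁]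
        rfl
    _ = _ := by
        rw [if_congr ⟨hcong.symm.trans, hcong.trans⟩ rfl rfl]
        split_ifs <;> ring

lemma sum_filter_V0 (q : ℕ) (γ : ℤ) (ε : ℕ → ℝ) {d d₁ d₂ : ℕ} (r u₁ : ℕ)
    (hq : q ≠ 0) (hd₁q : d₁ ∣ q) (hd₂ : 0 < d₂) (h₁ : d ∣ d₁) (h₂ : d ∣ d₂) :
    ∑ r₁ ∈ range d₁, ∑ r₂ ∈ (range d₂).filter
        (fun r₂ : ℕ => ((r₁ : ℤ) - γ * (r₂ : ℤ)) % (d : ℤ) = (r : ℤ) % (d : ℤ)),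
      V0 q γ ε d₁ r₁ d₂ r₂ u₁
      = if (u₁ : ℤ) ≡ r [ZMOD d] then ε d₁ * ε d₂ else 0 := by
  have hd₁ : 0 < d₁ := Nat.pos_of_dvd_of_pos hd₁q (Nat.pos_of_ne_zero hq)
  have hsummand : ∀ u₂ : ℕ,
      ∑ r₁ ∈ range d₁, ∑ r₂ ∈ (range d₂).filter
          (fun r₂ : ℕ => ((r₁ : ℤ) - γ * (r₂ : ℤ)) % (d : ℤ) = (r : ℤ) % (d : ℤ)),
        1 / (q : ℝ) * Vch ε d₁ r₁ (((u₁ : ℤ) + γ * (u₂ : ℤ)) % (q : ℤ)) * Vch ε d₂ r₂ (u₂ : ℤ)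
        = 1 / (q : ℝ) * if (u₁ : ℤ) ≡ r [ZMOD d] then ε d₁ * ε d₂ else 0 := by
    intro u₂
    rw [← add_sub_cancel_right (u₁ : ℤ) (γ * u₂), ← sum_filter_Vch_mul_Vch ε γ r hd₁ hd₂ h₁ h₂,
      add_sub_cancel_right, mul_sum]
    simp only [mul_sum, Vch_emod_of_dvd ε hd₁q, mul_assoc]
  unfold V0
  rw [sum_congr rfl fun r₁ _ => sum_comm, sum_comm, sum_congr rfl fun u₂ _ => hsummand u₂,
    sum_const, card_range, nsmul_eq_mul, ← mul_assoc, mul_one_div_cancel (by exact_mod_cast hq),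
    one_mul]

theorem stmt_1_general (q : ℕ) (γ : ℤ) (ε : ℕ → ℝ) (u₁ : ℕ) (d : ℕ) (r : ℕ) :
    (∑ d₁ ∈ q.divisors, ∑ d₂ ∈ q.divisors.filter (fun d₂ => Nat.gcd d₁ d₂ = d),
      ∑ r₁ ∈ range d₁, ∑ r₂ ∈ (range d₂).filter
          (fun r₂ : ℕ => ((r₁ : ℤ) - γ * (r₂ : ℤ)) % (d : ℤ) = (r : ℤ) % (d : ℤ)),
        V0 q γ ε d₁ r₁ d₂ r₂ u₁)
      = if (u₁ : ℤ) % (d : ℤ) = (r : ℤ) % (d : ℤ)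
        then ∑ x ∈ (q.divisors ×ˢ q.divisors).filter (fun x => Nat.gcd x.1 x.2 = d),
          ε x.1 * ε x.2
        else 0 := by
  change _ = if (u₁ : ℤ) ≡ r [ZMOD d] then _ else 0
  have hpair : ∀ d₁ ∈ q.divisors, ∀ d₂ ∈ q.divisors.filter (fun d₂ => Nat.gcd d₁ d₂ = d),
      ∑ r₁ ∈ range d₁, ∑ r₂ ∈ (range d₂).filter
          (fun r₂ : ℕ => ((r₁ : ℤ) - γ * (r₂ : ℤ)) % (d : ℤ) = (r : ℤ) % (d : ℤ)),
        V0 q γ ε d₁ r₁ d₂ r₂ u₁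
        = if (u₁ : ℤ) ≡ r [ZMOD d] then ε d₁ * ε d₂ else 0 := by
    intro d₁ hd₁ d₂ hd₂
    obtain ⟨hd₂q, rfl⟩ := mem_filter.mp hd₂
    exact sum_filter_V0 q γ ε r u₁ (Nat.mem_divisors.mp hd₁).2 (Nat.dvd_of_mem_divisors hd₁)
      (Nat.pos_of_mem_divisors hd₂q) (Nat.gcd_dvd_left d₁ d₂) (Nat.gcd_dvd_right d₁ d₂)
  rw [sum_congr rfl fun d₁ hd₁ => sum_congr rfl (hpair d₁ hd₁), sum_filter, sum_product]
  split_ifs <;> simp only [sum_filter, sum_const_zero]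

/-- For every `d ∈ D_q` and `r ∈ Z_d`, the sum of
`V⁰([r₁]_{d₁}, [r₂]_{d₂} ∣ u₁)` over all `d₁, d₂ ∈ D_q` with `gcd(d₁, d₂) = d` and residues
`r₁ ∈ Z_{d₁}`, `r₂ ∈ Z_{d₂}` with `r₁ − γ·r₂ ≡ r (mod d)` equals
`Σ_{(d₁,d₂) ∈ D_q × D_q, gcd(d₁,d₂) = d} ε_{d₁}·ε_{d₂}` if `u₁ ≡ r (mod d)`, and `0` otherwise. -/
theorem stmt_1 (q : ℕ) (hq : 2 ≤ q) (γ : ℤ) (hγ : Int.gcd γ (q : ℤ) = 1)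
    (ε : ℕ → ℝ) (hε : ∀ d ∈ q.divisors, 0 ≤ ε d) (hsum : ∑ d ∈ q.divisors, ε d = 1)
    (u₁ : ℕ) (hu₁ : u₁ ∈ range q) (d : ℕ) (hd : d ∈ q.divisors) (r : ℕ) (hr : r ∈ range d) :
    (∑ d₁ ∈ q.divisors, ∑ d₂ ∈ q.divisors.filter (fun d₂ => Nat.gcd d₁ d₂ = d),
      ∑ r₁ ∈ range d₁, ∑ r₂ ∈ (range d₂).filter
          (fun r₂ : ℕ => ((r₁ : ℤ) - γ * (r₂ : ℤ)) % (d : ℤ) = (r : ℤ) % (d : ℤ)),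
        V0 q γ ε d₁ r₁ d₂ r₂ u₁)
      = if (u₁ : ℤ) % (d : ℤ) = (r : ℤ) % (d : ℤ)
        then ∑ x ∈ (q.divisors ×ˢ q.divisors).filter (fun x => Nat.gcd x.1 x.2 = d),
          ε x.1 * ε x.2
        else 0 :=
  stmt_1_general q γ ε u₁ d r
end

section
/- Fix an integer γ with gcd(γ, q) = 1 and u₂ ∈ Z_q. For divisors d₁, d₂ ∈ D_q, residues r₁ ∈ Z_{d₁}, r₂ ∈ Z_{d₂}, and u₁ ∈ Z_q, define V¹([r₁]_{d₁}, [r₂]_{d₂}, u₁ ∣ u₂) := (1/q) · V([r₁]_{d₁} ∣ u₁ + γ·u₂ mod q) · V([r₂]_{d₂} ∣ u₂). Then for every d ∈ D_q and r ∈ Z_d: Σ_{d₁, d₂ ∈ D_q with lcm(d₁,d₂) = d} Σ_{(u₁,r₁,r₂) ∈ Z_q × Z_{d₁} × Z_{d₂} with r₁ − u₁ ≡ γ·r (mod d₁) and r₂ ≡ r (mod d₂)} V¹([r₁]_{d₁}, [r₂]_{d₂}, u₁ ∣ u₂) equals Σ_{(d₁,d₂) ∈ D_q × D_q, lcm(d₁,d₂)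 = d} ε_{d₁}·ε_{d₂} if u₂ ≡ r (mod d), and equals 0 otherwise. -/
/-! Summing over the residue classes `r₁, r₂` collapses each inner sum to a single term, which is
`ε d₁ · [u₂ ≡ r mod d₁] · ε d₂ · [u₂ ≡ r mod d₂]`: the constraint `r₁ − u₁ ≡ γ r (mod d₁)` turns
the first channel's condition into `γ u₂ ≡ γ r (mod d₁)`, and `γ` is invertible modulo `d₁ ∣ q`.
The two congruences together say `u₂ ≡ r (mod lcm(d₁, d₂))`, and the `q` values of `u₁` cancel the
factor `1/q`. -/

open Finset

/-- The plus polar transform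
`V¹([r₁]_{d₁}, [r₂]_{d₂}, u₁ ∣ u₂) = (1/q) · V([r₁]_{d₁} ∣ u₁ + γ·u₂ mod q) · V([r₂]_{d₂} ∣ u₂)`. -/
noncomputable def V1 (q : ℕ) (γ : ℤ) (ε : ℕ → ℝ) (d₁ r₁ d₂ r₂ u₁ u₂ : ℕ) : ℝ :=
  (1 / (q : ℝ)) * Vch ε d₁ r₁ (((u₁ : ℤ) + γ * (u₂ : ℤ)) % (q : ℤ)) * Vch ε d₂ r₂ (u₂ : ℤ)

lemma Int.sub_modEq_iff_modEq_add' {n a b c : ℤ} : a - b ≡ c [ZMOD n] ↔ a ≡ b + c [ZMOD n] := by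
  rw [Int.modEq_iff_dvd, Int.modEq_iff_dvd, show c - (a - b) = b + c - a by ring]

lemma Int.emod_add_mul_modEq_add_mul_iff {m q γ : ℤ} (hmq : m ∣ q) (hγ : IsCoprime γ m)
    (a x y : ℤ) : (a + γ * x) % q ≡ a + γ * y [ZMOD m] ↔ x ≡ y [ZMOD m] := by
  have hred : (a + γ * x) % q ≡ a + γ * x [ZMOD m] := (Int.mod_modEq _ q).of_dvd hmq
  refine ⟨fun h => ?_, fun h => hred.trans ((h.mul_left γ).add_left a)⟩
  have hγxy : γ * x ≡ γ * y [ZMOD m] := (hred.symm.trans h).add_left_cancel' a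
  rw [Int.modEq_iff_dvd, ← mul_sub] at hγxy
  exact (Int.modEq_iff_dvd).mpr (hγ.symm.dvd_of_dvd_mul_left hγxy)

lemma filter_range_emod_eq_singleton {m : ℕ} (hm : 0 < m) (c : ℤ) :
    (range m).filter (fun s : ℕ => (s : ℤ) % m = c % m) = {(c % m).toNat} := by
  have hc : 0 ≤ c % m := Int.emod_nonneg c (by omega)
  have hcm : c % m < m := Int.emod_lt_of_pos c (by omega)
  ext s
  simp only [mem_filter, mem_range, mem_singleton]
  constructor
  · rintro ⟨hs, h⟩
    rw [Int.emod_eq_of_lt (by omega) (by omega)] at h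
    omega
  · rintro rfl
    exact ⟨by omega, by rw [Int.toNat_of_nonneg hc, Int.emod_emod]⟩

lemma sum_Vch_residue_class (ε : ℕ → ℝ) {m : ℕ} (hm : 0 < m) (c x : ℤ) :
    ∑ s ∈ (range m).filter (fun s : ℕ => (s : ℤ) % m = c % m), Vch ε m s x
      = if x ≡ c [ZMOD m] then ε m else 0 := by
  rw [filter_range_emod_eq_singleton hm, sum_singleton, Vch,
    Int.toNat_of_nonneg (Int.emod_nonneg c (by omega)), Int.emod_emod]
  rfl

lemma sum_V1_eq_ite_modEq_lcm {q : ℕ} {γ : ℤ} (hγ : IsCoprime γ q) (ε : ℕ → ℝ) {d₁ d₂ : ℕ}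
    (hd₁ : d₁ ∈ q.divisors) (hd₂ : d₂ ∈ q.divisors) (r u₂ : ℕ) :
    ∑ u₁ ∈ range q,
        ∑ r₁ ∈ (range d₁).filter
            (fun r₁ : ℕ => ((r₁ : ℤ) - (u₁ : ℤ)) % (d₁ : ℤ) = (γ * (r : ℤ)) % (d₁ : ℤ)),
          ∑ r₂ ∈ (range d₂).filter
              (fun r₂ : ℕ => (r₂ : ℤ) % (d₂ : ℤ) = (r : ℤ) % (d₂ : ℤ)),
            V1 q γ ε d₁ r₁ d₂ r₂ u₁ u₂
      = if (u₂ : ℤ) ≡ r [ZMOD (Nat.lcm d₁ d₂)] then ε d₁ * ε d₂ else 0 := by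
  obtain ⟨hd₁q, hq⟩ := Nat.mem_divisors.mp hd₁
  have hd₁dvd : (d₁ : ℤ) ∣ q := Int.natCast_dvd_natCast.mpr hd₁q
  have hγd₁ : IsCoprime γ d₁ := hγ.of_isCoprime_of_dvd_right hd₁dvd
  have hqR : (q : ℝ) ≠ 0 := Nat.cast_ne_zero.mpr hq
  have inner (u₁ : ℕ) :
      ∑ r₁ ∈ (range d₁).filter
          (fun r₁ : ℕ => ((r₁ : ℤ) - (u₁ : ℤ)) % (d₁ : ℤ) = (γ * (r : ℤ)) % (d₁ : ℤ)),
        ∑ r₂ ∈ (range d₂).filter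
            (fun r₂ : ℕ => (r₂ : ℤ) % (d₂ : ℤ) = (r : ℤ) % (d₂ : ℤ)),
          V1 q γ ε d₁ r₁ d₂ r₂ u₁ u₂
        = 1 / q * if (u₂ : ℤ) ≡ r [ZMOD (Nat.lcm d₁ d₂)] then ε d₁ * ε d₂ else 0 := by
    have hr₁ : (range d₁).filter
          (fun r₁ : ℕ => ((r₁ : ℤ) - (u₁ : ℤ)) % (d₁ : ℤ) = (γ * (r : ℤ)) % (d₁ : ℤ))
        = (range d₁).filter
          (fun r₁ : ℕ => (r₁ : ℤ) % (d₁ : ℤ) = ((u₁ : ℤ) + γ * r) % (d₁ : ℤ)) :=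
      filter_congr fun _ _ => Int.sub_modEq_iff_modEq_add'
    simp only [hr₁, V1]
    rw [← sum_mul_sum, ← mul_sum, sum_Vch_residue_class ε (Nat.pos_of_mem_divisors hd₁),
      sum_Vch_residue_class ε (Nat.pos_of_mem_divisors hd₂), mul_assoc, ite_zero_mul_ite_zero]
    simp only [Int.emod_add_mul_modEq_add_mul_iff hd₁dvd hγd₁, Int.modEq_and_modEq_iff_modEq_lcm]
    rfl
  rw [sum_congr rfl fun u₁ _ => inner u₁, sum_const, card_range, nsmul_eq_mul, ← mul_assoc,
    mul_one_div_cancel hqR, one_mul]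

theorem stmt_2_general (q : ℕ) (γ : ℤ) (hγ : Int.gcd γ (q : ℤ) = 1)
    (ε : ℕ → ℝ) (u₂ : ℕ) (d : ℕ) (r : ℕ) :
    (∑ d₁ ∈ q.divisors, ∑ d₂ ∈ q.divisors.filter (fun d₂ => Nat.lcm d₁ d₂ = d),
      ∑ u₁ ∈ range q,
        ∑ r₁ ∈ (range d₁).filter
            (fun r₁ : ℕ => ((r₁ : ℤ) - (u₁ : ℤ)) % (d₁ : ℤ) = (γ * (r : ℤ)) % (d₁ : ℤ)),
          ∑ r₂ ∈ (range d₂).filter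
              (fun r₂ : ℕ => (r₂ : ℤ) % (d₂ : ℤ) = (r : ℤ) % (d₂ : ℤ)),
            V1 q γ ε d₁ r₁ d₂ r₂ u₁ u₂)
      = if (u₂ : ℤ) % (d : ℤ) = (r : ℤ) % (d : ℤ)
        then ∑ x ∈ (q.divisors ×ˢ q.divisors).filter (fun x => Nat.lcm x.1 x.2 = d),
          ε x.1 * ε x.2
        else 0 := by
  have hγq : IsCoprime γ q := Int.isCoprime_iff_gcd_eq_one.mpr hγ
  calc _ = ∑ d₁ ∈ q.divisors, ∑ d₂ ∈ q.divisors.filter (fun d₂ => Nat.lcm d₁ d₂ = d),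
        if (u₂ : ℤ) % (d : ℤ) = (r : ℤ) % (d : ℤ) then ε d₁ * ε d₂ else 0 := by
        refine sum_congr rfl fun d₁ hd₁ => sum_congr rfl fun d₂ hd₂ => ?_
        obtain ⟨hd₂q, rfl⟩ := mem_filter.mp hd₂
        exact sum_V1_eq_ite_modEq_lcm hγq ε hd₁ hd₂q r u₂
    _ = _ := by
        split_ifs <;> simp [sum_filter, sum_product]

/-- For every `d ∈ D_q` and `r ∈ Z_d`, the sum of `V¹([r₁]_{d₁}, [r₂]_{d₂}, u₁ ∣ u₂)` over all
`d₁, d₂ ∈ D_q` with `lcm(d₁, d₂) = d` and all `(u₁, r₁, r₂) ∈ Z_q × Z_{d₁} × Z_{d₂}` with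
`r₁ − u₁ ≡ γ·r (mod d₁)` and `r₂ ≡ r (mod d₂)` equals
`Σ_{(d₁,d₂) ∈ D_q × D_q, lcm(d₁,d₂) = d} ε_{d₁}·ε_{d₂}` if `u₂ ≡ r (mod d)`, and `0` otherwise. -/
theorem stmt_2 (q : ℕ) (hq : 2 ≤ q) (γ : ℤ) (hγ : Int.gcd γ (q : ℤ) = 1)
    (ε : ℕ → ℝ) (hε : ∀ d ∈ q.divisors, 0 ≤ ε d) (hsum : ∑ d ∈ q.divisors, ε d = 1)
    (u₂ : ℕ) (hu₂ : u₂ ∈ range q) (d : ℕ) (hd : d ∈ q.divisors) (r : ℕ) (hr : r ∈ range d) :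
    (∑ d₁ ∈ q.divisors, ∑ d₂ ∈ q.divisors.filter (fun d₂ => Nat.lcm d₁ d₂ = d),
      ∑ u₁ ∈ range q,
        ∑ r₁ ∈ (range d₁).filter
            (fun r₁ : ℕ => ((r₁ : ℤ) - (u₁ : ℤ)) % (d₁ : ℤ) = (γ * (r : ℤ)) % (d₁ : ℤ)),
          ∑ r₂ ∈ (range d₂).filter
              (fun r₂ : ℕ => (r₂ : ℤ) % (d₂ : ℤ) = (r : ℤ) % (d₂ : ℤ)),
            V1 q γ ε d₁ r₁ d₂ r₂ u₁ u₂)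
      = if (u₂ : ℤ) % (d : ℤ) = (r : ℤ) % (d : ℤ)
        then ∑ x ∈ (q.divisors ×ˢ q.divisors).filter (fun x => Nat.lcm x.1 x.2 = d),
          ε x.1 * ε x.2
        else 0 :=
  stmt_2_general q γ hγ ε u₂ d r
end

section
/- Let q = p^m be a prime power (p prime, m ≥ 1) and let (ε_d : d ∈ D_q) be a probability vector on the set D_q of positive divisors of q. Then for every d ∈ D_q, ε_d^− + ε_d^+ = 2·ε_d. -/
/-!
For divisors `a ∣ b` one has `gcd a b = a` and `lcm a b = b`, so whenever divisibility is a total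
order on `D_q` the pair `{gcd a b, lcm a b}` is just `{a, b}`. Summed over all pairs, the weight
that `ε^−` and `ε^+` give to `d` is then the weight of the pairs with `a = d` plus those with `b = d`,
that is `2 ε_d Σ ε`. The divisors of a prime power are totally ordered by divisibility.
-/

open Finset

/-- `ε_d^− := Σ_{(d₁,d₂) ∈ D_q × D_q, gcd(d₁,d₂) = d} ε_{d₁}·ε_{d₂}`. -/
noncomputable def epsMinus (q : ℕ) (ε : ℕ → ℝ) (d : ℕ) : ℝ :=
  ∑ x ∈ (q.divisors ×ˢ q.divisors).filter (fun x => Nat.gcd x.1 x.2 = d), ε x.1 * ε x.2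

/-- `ε_d^+ := Σ_{(d₁,d₂) ∈ D_q × D_q, lcm(d₁,d₂) = d} ε_{d₁}·ε_{d₂}`. -/
noncomputable def epsPlus (q : ℕ) (ε : ℕ → ℝ) (d : ℕ) : ℝ :=
  ∑ x ∈ (q.divisors ×ˢ q.divisors).filter (fun x => Nat.lcm x.1 x.2 = d), ε x.1 * ε x.2

theorem Nat.ite_gcd_eq_add_ite_lcm_eq {M : Type*} [AddCommMonoid M] {a b d : ℕ}
    (hab : a ∣ b ∨ b ∣ a) (x : M) :
    ((if a.gcd b = d then x else 0) + if a.lcm b = d then x else 0) =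
      (if a = d then x else 0) + if b = d then x else 0 := by
  rcases hab with hab | hba
  · rw [Nat.gcd_eq_left hab, Nat.lcm_eq_right hab]
  · rw [Nat.gcd_eq_right hba, Nat.lcm_eq_left hba, add_comm]

theorem Nat.isChain_dvd_divisors_prime_pow {p : ℕ} (hp : p.Prime) (m : ℕ) :
    IsChain (· ∣ ·) ((p ^ m).divisors : Set ℕ) := by
  rintro _ ha _ hb -
  obtain ⟨i, -, rfl⟩ := (Nat.dvd_prime_pow hp).mp (Nat.dvd_of_mem_divisors ha)
  obtain ⟨j, -, rfl⟩ := (Nat.dvd_prime_pow hp).mp (Nat.dvd_of_mem_divisors hb)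
  exact (le_total i j).imp (pow_dvd_pow p) (pow_dvd_pow p)

theorem epsMinus_add_epsPlus_of_isChain {q : ℕ} (hq : IsChain (· ∣ ·) (q.divisors : Set ℕ))
    (ε : ℕ → ℝ) {d : ℕ} (hd : d ∈ q.divisors) :
    epsMinus q ε d + epsPlus q ε d = 2 * ε d * ∑ e ∈ q.divisors, ε e := by
  have hpair : ∀ x ∈ q.divisors ×ˢ q.divisors,
      ((if x.1.gcd x.2 = d then ε x.1 * ε x.2 else 0) +
        if x.1.lcm x.2 = d then ε x.1 * ε x.2 else 0) =
      (if x.1 = d then ε x.1 * ε x.2 else 0) + if x.2 = d then ε x.1 * ε x.2 else 0 := by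
    rintro ⟨a, b⟩ hx
    rw [mem_product] at hx
    exact Nat.ite_gcd_eq_add_ite_lcm_eq (hq.total hx.1 hx.2) _
  have hleft : ∑ x ∈ q.divisors ×ˢ q.divisors, (if x.1 = d then ε x.1 * ε x.2 else 0) =
      ε d * ∑ e ∈ q.divisors, ε e := by
    rw [sum_product, sum_eq_single_of_mem d hd fun a _ had => by simp [had], mul_sum]
    simp
  have hright : ∑ x ∈ q.divisors ×ˢ q.divisors, (if x.2 = d then ε x.1 * ε x.2 else 0) =
      ε d * ∑ e ∈ q.divisors, ε e := by
    rw [sum_product_right, sum_eq_single_of_mem d hd fun b _ hbd => by simp [hbd], mul_sum]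
    simp [mul_comm]
  rw [epsMinus, epsPlus, sum_filter, sum_filter, ← sum_add_distrib, sum_congr rfl hpair,
    sum_add_distrib, hleft, hright]
  ring

theorem stmt_5_general (p m q : ℕ) (hp : p.Prime) (hq : q = p ^ m)
    (ε : ℕ → ℝ) (hsum : ∑ d ∈ q.divisors, ε d = 1)
    (d : ℕ) (hd : d ∈ q.divisors) :
    epsMinus q ε d + epsPlus q ε d = 2 * ε d := by
  subst hq
  rw [epsMinus_add_epsPlus_of_isChain (Nat.isChain_dvd_divisors_prime_pow hp m) ε hd, hsum,
    mul_one]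

/-- Let `q = p^m` be a prime power and `(ε_d : d ∈ D_q)` a probability vector on the
positive divisors of `q`.  Then for every `d ∈ D_q`, `ε_d^− + ε_d^+ = 2·ε_d`. -/
theorem stmt_5 (p m q : ℕ) (hp : p.Prime) (hm : 1 ≤ m) (hq : q = p ^ m)
    (ε : ℕ → ℝ) (hε : ∀ d ∈ q.divisors, 0 ≤ ε d) (hsum : ∑ d ∈ q.divisors, ε d = 1)
    (d : ℕ) (hd : d ∈ q.divisors) :
    epsMinus q ε d + epsPlus q ε d = 2 * ε d :=
  stmt_5_general p m q hp hq ε hsum d hd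
end

section
/- Let q = p^m be a prime power (p prime, m ≥ 1), let (ε_d : d ∈ D_q) be a probability vector on the set D_q of positive divisors of q, and define F_α(w) := (α/(α−1)) · ln( Σ_{d ∈ D_q} w_d · d^{(α−1)/α} ) for a nonnegative family (w_d : d ∈ D_q) with positive sum. Then for every real α with 0 < α < 1, F_α(ε^−) + F_α(ε^+) ≥ 2 · F_α(ε). -/
/-! On the divisors of a prime power divisibility is a total order, so `{gcd a b, lcm a b} = {a, b}`
and every weight `g` satisfies `g (gcd a b) + g (lcm a b) = g a + g b`. Hence the linear functional
`L w = ∑ w_d d^((α-1)/α)` satisfies `L ε⁻ + L ε⁺ = 2 L ε`, and AM–GM gives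
`log L ε⁻ + log L ε⁺ ≤ 2 log L ε`; the factor `α/(α-1)` is negative, which reverses this. -/

open Finset

/-- `F_α(w) := (α/(α−1)) · ln(Σ_{d ∈ D_q} w_d · d^{(α−1)/α})`. -/
noncomputable def Fa (q : ℕ) (α : ℝ) (w : ℕ → ℝ) : ℝ :=
  (α / (α - 1)) * Real.log (∑ d ∈ q.divisors, w d * (d : ℝ) ^ ((α - 1) / α))

theorem Nat.dvd_or_dvd_of_dvd_prime_pow {p m a b : ℕ} (hp : p.Prime) (ha : a ∣ p ^ m)
    (hb : b ∣ p ^ m) : a ∣ b ∨ b ∣ a := by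
  obtain ⟨i, -, rfl⟩ := (Nat.dvd_prime_pow hp).mp ha
  obtain ⟨j, -, rfl⟩ := (Nat.dvd_prime_pow hp).mp hb
  exact (le_total i j).imp (pow_dvd_pow p) (pow_dvd_pow p)

theorem Nat.apply_gcd_add_apply_lcm {M : Type*} [AddCommMagma M] (g : ℕ → M) {a b : ℕ}
    (hab : a ∣ b ∨ b ∣ a) : g (a.gcd b) + g (a.lcm b) = g a + g b := by
  rcases hab with hab | hba
  · rw [Nat.gcd_eq_left hab, Nat.lcm_eq_right hab]
  · rw [Nat.gcd_eq_right hba, Nat.lcm_eq_left hba, add_comm]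

theorem Finset.sum_mul_pos_of_sum_ne_zero {ι : Type*} {s : Finset ι} {w g : ι → ℝ}
    (hw : ∀ i ∈ s, 0 ≤ w i) (hw0 : ∑ i ∈ s, w i ≠ 0) (hg : ∀ i ∈ s, 0 < g i) :
    0 < ∑ i ∈ s, w i * g i := by
  obtain ⟨i, hi, hwi⟩ := exists_ne_zero_of_sum_ne_zero hw0
  exact sum_pos' (fun j hj => mul_nonneg (hw j hj) (hg j hj).le)
    ⟨i, hi, mul_pos ((hw i hi).lt_of_ne' hwi) (hg i hi)⟩

theorem Real.two_mul_mul_log_le_of_nonpos {c x y z : ℝ} (hc : c ≤ 0) (hx : 0 < x) (hy : 0 < y)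
    (hxy : x + y = 2 * z) : 2 * (c * log z) ≤ c * log x + c * log y := by
  have hlog : log x + log y ≤ 2 * log z :=
    calc log x + log y = log (x * y) := (log_mul hx.ne' hy.ne').symm
      _ ≤ log (z ^ 2) := log_le_log (mul_pos hx hy) (by nlinarith [sq_nonneg (x - y)])
      _ = 2 * log z := by rw [log_pow, Nat.cast_ofNat]
  linarith [mul_le_mul_of_nonpos_left hlog hc]

theorem Finset.sum_product_mul_mul_add {ι R : Type*} [CommSemiring R] (s : Finset ι)
    (ε g : ι → R) :
    ∑ x ∈ s ×ˢ s, ε x.1 * ε x.2 * (g x.1 + g x.2) =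
      2 * (∑ i ∈ s, ε i) * ∑ i ∈ s, ε i * g i := by
  rw [show 2 * (∑ i ∈ s, ε i) * ∑ i ∈ s, ε i * g i =
      (∑ i ∈ s, ε i * g i) * (∑ i ∈ s, ε i) + (∑ i ∈ s, ε i) * ∑ i ∈ s, ε i * g i by ring,
    sum_mul_sum, sum_mul_sum, sum_product, ← sum_add_distrib]
  refine sum_congr rfl fun i _ => ?_
  rw [← sum_add_distrib]
  exact sum_congr rfl fun j _ => by ring

theorem Finset.sum_product_mul_eq_sq {ι R : Type*} [CommSemiring R] (s : Finset ι) (ε : ι → R) :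
    ∑ x ∈ s ×ˢ s, ε x.1 * ε x.2 = (∑ i ∈ s, ε i) ^ 2 := by
  rw [sum_product, ← sum_mul_sum, sq]

theorem Finset.sum_fiberwise_product_mul {ι R : Type*} [DecidableEq ι] [CommSemiring R]
    {s : Finset ι} {h : ι × ι → ι} (hh : ∀ x ∈ s ×ˢ s, h x ∈ s) (ε g : ι → R) :
    ∑ d ∈ s, (∑ x ∈ (s ×ˢ s).filter (fun x => h x = d), ε x.1 * ε x.2) * g d =
      ∑ x ∈ s ×ˢ s, ε x.1 * ε x.2 * g (h x) := by
  rw [← sum_fiberwise_of_maps_to hh]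
  refine sum_congr rfl fun d _ => ?_
  rw [sum_mul]
  exact sum_congr rfl fun x hx => by rw [(mem_filter.mp hx).2]

section

variable (q : ℕ) (ε : ℕ → ℝ)

theorem sum_epsMinus_mul (g : ℕ → ℝ) :
    ∑ d ∈ q.divisors, epsMinus q ε d * g d =
      ∑ x ∈ q.divisors ×ˢ q.divisors, ε x.1 * ε x.2 * g (x.1.gcd x.2) := by
  refine sum_fiberwise_product_mul (fun x hx => ?_) ε g
  obtain ⟨⟨hx₁, hq⟩, -⟩ := (mem_product.mp hx).imp_left Nat.mem_divisors.mp
  exact Nat.mem_divisors.mpr ⟨(Nat.gcd_dvd_left _ _).trans hx₁, hq⟩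

theorem sum_epsPlus_mul (g : ℕ → ℝ) :
    ∑ d ∈ q.divisors, epsPlus q ε d * g d =
      ∑ x ∈ q.divisors ×ˢ q.divisors, ε x.1 * ε x.2 * g (x.1.lcm x.2) := by
  refine sum_fiberwise_product_mul (fun x hx => ?_) ε g
  obtain ⟨⟨hx₁, hq⟩, hx₂, -⟩ := (mem_product.mp hx).imp Nat.mem_divisors.mp Nat.mem_divisors.mp
  exact Nat.mem_divisors.mpr ⟨Nat.lcm_dvd hx₁ hx₂, hq⟩

theorem sum_epsMinus : ∑ d ∈ q.divisors, epsMinus q ε d = (∑ d ∈ q.divisors, ε d) ^ 2 := by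
  simpa [sum_product_mul_eq_sq] using sum_epsMinus_mul q ε 1

theorem sum_epsPlus : ∑ d ∈ q.divisors, epsPlus q ε d = (∑ d ∈ q.divisors, ε d) ^ 2 := by
  simpa [sum_product_mul_eq_sq] using sum_epsPlus_mul q ε 1

variable {q ε}

theorem epsMinus_nonneg (hε : ∀ d ∈ q.divisors, 0 ≤ ε d) (d : ℕ) : 0 ≤ epsMinus q ε d :=
  sum_nonneg fun _ hx =>
    have hx := mem_product.mp (mem_filter.mp hx).1
    mul_nonneg (hε _ hx.1) (hε _ hx.2)

theorem epsPlus_nonneg (hε : ∀ d ∈ q.divisors, 0 ≤ ε d) (d : ℕ) : 0 ≤ epsPlus q ε d :=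
  sum_nonneg fun _ hx =>
    have hx := mem_product.mp (mem_filter.mp hx).1
    mul_nonneg (hε _ hx.1) (hε _ hx.2)

theorem sum_epsMinus_mul_add_sum_epsPlus_mul
    (hchain : ∀ a ∈ q.divisors, ∀ b ∈ q.divisors, a ∣ b ∨ b ∣ a) (g : ℕ → ℝ) :
    ∑ d ∈ q.divisors, epsMinus q ε d * g d + ∑ d ∈ q.divisors, epsPlus q ε d * g d =
      2 * (∑ d ∈ q.divisors, ε d) * ∑ d ∈ q.divisors, ε d * g d := by
  rw [sum_epsMinus_mul, sum_epsPlus_mul, ← sum_add_distrib, ← sum_product_mul_mul_add]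
  refine sum_congr rfl fun x hx => ?_
  obtain ⟨h₁, h₂⟩ := mem_product.mp hx
  rw [← mul_add, Nat.apply_gcd_add_apply_lcm g (hchain _ h₁ _ h₂)]

end

theorem stmt_11_general (p m q : ℕ) (hp : p.Prime) (hq : q = p ^ m)
    (ε : ℕ → ℝ) (hε : ∀ d ∈ q.divisors, 0 ≤ ε d) (hsum : ∑ d ∈ q.divisors, ε d = 1)
    (α : ℝ) (hα0 : 0 < α) (hα1 : α < 1) :
    Fa q α (epsMinus q ε) + Fa q α (epsPlus q ε) ≥ 2 * Fa q α ε := by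
  have hchain : ∀ a ∈ q.divisors, ∀ b ∈ q.divisors, a ∣ b ∨ b ∣ a := fun a ha b hb =>
    Nat.dvd_or_dvd_of_dvd_prime_pow hp (hq ▸ Nat.dvd_of_mem_divisors ha)
      (hq ▸ Nat.dvd_of_mem_divisors hb)
  have hg : ∀ d ∈ q.divisors, 0 < (d : ℝ) ^ ((α - 1) / α) := fun d hd =>
    Real.rpow_pos_of_pos (Nat.cast_pos.mpr (Nat.pos_of_mem_divisors hd)) _
  have hL := sum_epsMinus_mul_add_sum_epsPlus_mul (ε := ε) hchain
    fun d : ℕ => (d : ℝ) ^ ((α - 1) / α)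
  rw [hsum, mul_one] at hL
  have hc : α / (α - 1) ≤ 0 := div_nonpos_of_nonneg_of_nonpos hα0.le (by linarith)
  exact Real.two_mul_mul_log_le_of_nonpos hc
    (sum_mul_pos_of_sum_ne_zero (fun d _ => epsMinus_nonneg hε d) (by simp [sum_epsMinus, hsum]) hg)
    (sum_mul_pos_of_sum_ne_zero (fun d _ => epsPlus_nonneg hε d) (by simp [sum_epsPlus, hsum]) hg)
    hL

/-- Let `q = p^m` be a prime power and `(ε_d : d ∈ D_q)` a probability vector on the
positive divisors of `q`.  Then for every real `α` with `0 < α < 1`,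
`F_α(ε^−) + F_α(ε^+) ≥ 2·F_α(ε)`. -/
theorem stmt_11 (p m q : ℕ) (hp : p.Prime) (hm : 1 ≤ m) (hq : q = p ^ m)
    (ε : ℕ → ℝ) (hε : ∀ d ∈ q.divisors, 0 ≤ ε d) (hsum : ∑ d ∈ q.divisors, ε d = 1)
    (α : ℝ) (hα0 : 0 < α) (hα1 : α < 1) :
    Fa q α (epsMinus q ε) + Fa q α (epsPlus q ε) ≥ 2 * Fa q α ε :=
  stmt_11_general p m q hp hq ε hε hsum α hα0 hα1
end

section
/- For μ-almost every ω ∈ Ω and every r with 0 ≤ r ≤ m, the sequence (E_{r,n}(ω))_{n ≥ 0} converges, and its limit E_{r,∞}(ω) equals either 0 or 1. -/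
/-!
The tail sums `T_r(n) = ∑_{t=r}^m E_{t,n}` evolve autonomously: a `−` squares every tail sum, a
`+` squares every head sum `1 - T_r`, so each `T_r` follows the polarization orbit
`x ↦ x²` / `x ↦ 2x - x²` driven by fair coins. For `σ(x) = √(x(1-x))` one has
`σ(x²) + σ(2x - x²) ≤ √3 σ(x)`, so the average of `σ` over the `2ⁿ` coin prefixes is at most
`(√3/2)ⁿ σ(x)`, and by Borel–Cantelli almost surely `σ(T_r(n)) ≤ (9/10)ⁿ` eventually. The
increments of the orbit are `±T(1-T) = ±σ(T)²`, hence summable: `T_r` converges, and its limit is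
a fixed point `0` or `1`. Finally `E_r = T_r - T_{r+1}` with `T_r ≥ T_{r+1}`.
-/

open Finset MeasureTheory Filter

/-- The polarization process `E_{r,n}` on `Ω = ℕ → Bool` (`false` = `−`, `true` = `+`):
`E_{r,0} = ε_r` and, depending on the `(n+1)`-th coordinate of `ω`,
`E_{r,n+1} = E_{r,n}·(E_{r,n} + 2·Σ_{t=r+1}^{m} E_{t,n})` (coordinate `−`) or
`E_{r,n+1} = E_{r,n}·(E_{r,n} + 2·Σ_{t=0}^{r−1} E_{t,n})` (coordinate `+`). -/
noncomputable def Eproc (m : ℕ) (ε : ℕ → ℝ) : ℕ → (ℕ → Bool) → ℕ → ℝ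
  | 0, _, r => ε r
  | n + 1, ω, r =>
      if ω n = false then
        Eproc m ε n ω r * (Eproc m ε n ω r + 2 * ∑ t ∈ Finset.Icc (r + 1) m, Eproc m ε n ω t)
      else
        Eproc m ε n ω r * (Eproc m ε n ω r + 2 * ∑ t ∈ Finset.range r, Eproc m ε n ω t)

noncomputable def polarStep (x : ℝ) : Bool → ℝ
  | false => x ^ 2
  | true => 2 * x - x ^ 2

noncomputable def polarOrbit (ω : ℕ → Bool) (x : ℝ) : ℕ → ℝ
  | 0 => x
  | n + 1 => polarStep (polarOrbit ω x n) (ω n)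

noncomputable def bernoulliStd (x : ℝ) : ℝ := √(x * (1 - x))

section Polarization

variable {x : ℝ}

lemma polarStep_mem_Icc (hx : x ∈ Set.Icc 0 1) (b : Bool) : polarStep x b ∈ Set.Icc 0 1 := by
  obtain ⟨h0, h1⟩ := hx
  cases b <;> constructor <;> simp only [polarStep] <;> nlinarith

lemma polarOrbit_mem_Icc (ω : ℕ → Bool) (hx : x ∈ Set.Icc 0 1) (n : ℕ) :
    polarOrbit ω x n ∈ Set.Icc 0 1 := by
  induction n with
  | zero => exact hx
  | succ n ih => exact polarStep_mem_Icc ih _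

lemma abs_polarStep_sub (hx : x ∈ Set.Icc 0 1) (b : Bool) :
    |polarStep x b - x| = x * (1 - x) := by
  have hvar : 0 ≤ x * (1 - x) := mul_nonneg hx.1 (by linarith [hx.2])
  cases b
  · rw [polarStep, show x ^ 2 - x = -(x * (1 - x)) by ring, abs_neg, abs_of_nonneg hvar]
  · rw [polarStep, show 2 * x - x ^ 2 - x = x * (1 - x) by ring, abs_of_nonneg hvar]

lemma polarOrbit_eq_foldl (ω : ℕ → Bool) (x : ℝ) (n : ℕ) :
    polarOrbit ω x n = (List.ofFn fun i : Fin n => ω i).foldl polarStep x := by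
  induction n with
  | zero => rfl
  | succ n ih =>
    rw [polarOrbit, ih, List.ofFn_succ', List.concat_eq_append, List.foldl_concat]
    rfl

lemma sq_bernoulliStd (hx : x ∈ Set.Icc 0 1) : bernoulliStd x ^ 2 = x * (1 - x) :=
  Real.sq_sqrt (mul_nonneg hx.1 (by linarith [hx.2]))

lemma bernoulliStd_nonneg (x : ℝ) : 0 ≤ bernoulliStd x := Real.sqrt_nonneg _

/-- With `y = x(1-x)`: `σ(x²) = σ(x)√(x(1+x))`, `σ(2x-x²) = σ(x)√((1-x)(2-x))`, and
`(√(x(1+x)) + √((1-x)(2-x)))² = 2 - 2y + 2√(y(2+y)) ≤ 3` because `y ≤ 1/4`. -/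
lemma bernoulliStd_polarStep_add_le (hx : x ∈ Set.Icc 0 1) :
    bernoulliStd (polarStep x false) + bernoulliStd (polarStep x true)
      ≤ √3 * bernoulliStd x := by
  obtain ⟨h0, h1⟩ := hx
  have hvar : 0 ≤ x * (1 - x) := mul_nonneg h0 (by linarith)
  have hA : 0 ≤ x * (1 + x) := by nlinarith
  have hB : 0 ≤ (1 - x) * (2 - x) := by nlinarith
  have hfalse : bernoulliStd (polarStep x false) = bernoulliStd x * √(x * (1 + x)) := by
    rw [bernoulliStd, bernoulliStd, polarStep, ← Real.sqrt_mul hvar]; ring_nf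
  have htrue : bernoulliStd (polarStep x true) = bernoulliStd x * √((1 - x) * (2 - x)) := by
    rw [bernoulliStd, bernoulliStd, polarStep, ← Real.sqrt_mul hvar]; ring_nf
  rw [hfalse, htrue, ← mul_add, mul_comm]
  refine mul_le_mul_of_nonneg_right ?_ (bernoulliStd_nonneg x)
  rw [Real.le_sqrt (by positivity) (by norm_num)]
  have ha := Real.sq_sqrt hA
  have hb := Real.sq_sqrt hB
  have hab : (√(x * (1 + x)) * √((1 - x) * (2 - x))) ^ 2
      = x * (1 - x) * (2 + x * (1 - x)) := by
    rw [mul_pow, ha, hb]; ring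
  nlinarith [Real.sqrt_nonneg (x * (1 + x)), Real.sqrt_nonneg ((1 - x) * (2 - x)),
    mul_nonneg (Real.sqrt_nonneg (x * (1 + x))) (Real.sqrt_nonneg ((1 - x) * (2 - x))),
    sq_nonneg (2 * x - 1)]

lemma sum_bernoulliStd_foldl_le (n : ℕ) (hx : x ∈ Set.Icc 0 1) :
    ∑ w : Fin n → Bool, bernoulliStd ((List.ofFn w).foldl polarStep x)
      ≤ √3 ^ n * bernoulliStd x := by
  induction n generalizing x with
  | zero => simp
  | succ n ih =>
    calc ∑ w : Fin (n + 1) → Bool, bernoulliStd ((List.ofFn w).foldl polarStep x)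
        = ∑ b : Bool, ∑ w : Fin n → Bool,
            bernoulliStd ((List.ofFn w).foldl polarStep (polarStep x b)) := by
          rw [← Fintype.sum_prod_type', ← (Fin.consEquiv fun _ => Bool).sum_comp]
          simp [List.ofFn_succ]
      _ ≤ ∑ b : Bool, √3 ^ n * bernoulliStd (polarStep x b) :=
          sum_le_sum fun b _ => ih (polarStep_mem_Icc hx b)
      _ ≤ √3 ^ (n + 1) * bernoulliStd x := by
          rw [← mul_sum, Fintype.sum_bool, add_comm, pow_succ, mul_assoc]
          exact mul_le_mul_of_nonneg_left (bernoulliStd_polarStep_add_le hx) (by positivity)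

end Polarization

def IsFairCoin (μ : Measure (ℕ → Bool)) : Prop :=
  ∀ (s : Finset ℕ) (f : ℕ → Bool), μ {ω | ∀ n ∈ s, ω n = f n} = (1 / 2 : ENNReal) ^ s.card

lemma Finset.card_filter_lt_mul_le_sum {ι : Type*} (s : Finset ι) {f : ι → ℝ}
    (hf : ∀ i ∈ s, 0 ≤ f i) (c : ℝ) :
    #(s.filter fun i => c < f i) * c ≤ ∑ i ∈ s, f i := by
  calc #(s.filter fun i => c < f i) * c = ∑ _i ∈ s.filter fun i => c < f i, c := by
        rw [sum_const, nsmul_eq_mul]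
    _ ≤ ∑ i ∈ s.filter fun i => c < f i, f i := sum_le_sum fun i hi => (mem_filter.1 hi).2.le
    _ ≤ ∑ i ∈ s, f i := sum_le_sum_of_subset_of_nonneg (filter_subset _ _) fun i hi _ => hf i hi

namespace IsFairCoin

variable {μ : Measure (ℕ → Bool)} {x : ℝ}

lemma measure_prefix_mem_le (hμ : IsFairCoin μ) {n : ℕ} (B : Finset (Fin n → Bool)) :
    μ {ω | (fun i : Fin n => ω i) ∈ B} ≤ #B * (1 / 2) ^ n := by
  let extend (w : Fin n → Bool) (j : ℕ) : Bool := if h : j < n then w ⟨j, h⟩ else false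
  calc μ {ω | (fun i : Fin n => ω i) ∈ B}
      ≤ μ (⋃ w ∈ B, {ω | ∀ j ∈ range n, ω j = extend w j}) := by
        refine measure_mono fun ω hω => Set.mem_iUnion₂.2 ⟨_, hω, fun j hj => ?_⟩
        simp [extend, mem_range.1 hj]
    _ ≤ ∑ w ∈ B, μ {ω | ∀ j ∈ range n, ω j = extend w j} := measure_biUnion_finset_le _ _
    _ = ∑ _w ∈ B, (1 / 2) ^ n := sum_congr rfl fun w _ => by rw [hμ, card_range]
    _ = #B * (1 / 2) ^ n := by rw [sum_const, nsmul_eq_mul]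

lemma measure_lt_bernoulliStd_polarOrbit_le (hμ : IsFairCoin μ) (hx : x ∈ Set.Icc 0 1)
    (n : ℕ) {c : ℝ} (hc : 0 < c) :
    μ {ω | c < bernoulliStd (polarOrbit ω x n)}
      ≤ ENNReal.ofReal ((√3 / 2) ^ n * bernoulliStd x / c) := by
  set B := (univ : Finset (Fin n → Bool)).filter
    fun w => c < bernoulliStd ((List.ofFn w).foldl polarStep x)
  have hcard : (#B : ℝ) ≤ √3 ^ n * bernoulliStd x / c := by
    rw [le_div_iff₀ hc]
    exact (card_filter_lt_mul_le_sum _ (fun _ _ => bernoulliStd_nonneg _) c).trans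
      (sum_bernoulliStd_foldl_le n hx)
  calc μ {ω | c < bernoulliStd (polarOrbit ω x n)}
      = μ {ω | (fun i : Fin n => ω i) ∈ B} := by simp [B, polarOrbit_eq_foldl]
    _ ≤ #B * (1 / 2) ^ n := hμ.measure_prefix_mem_le B
    _ = ENNReal.ofReal (#B * (1 / 2) ^ n) := by
        rw [ENNReal.ofReal_mul (by positivity), ENNReal.ofReal_natCast, ENNReal.ofReal_pow
          (by norm_num), ENNReal.ofReal_div_of_pos (by norm_num)]
        simp
    _ ≤ ENNReal.ofReal ((√3 / 2) ^ n * bernoulliStd x / c) := by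
        refine ENNReal.ofReal_le_ofReal ?_
        calc (#B : ℝ) * (1 / 2) ^ n ≤ √3 ^ n * bernoulliStd x / c * (1 / 2) ^ n :=
              mul_le_mul_of_nonneg_right hcard (by positivity)
          _ = (√3 / 2) ^ n * bernoulliStd x / c := by simp only [div_pow, one_pow]; ring

lemma ae_eventually_bernoulliStd_polarOrbit_le (hμ : IsFairCoin μ) (hx : x ∈ Set.Icc 0 1)
    {ρ : ℝ} (hρ : √3 / 2 < ρ) :
    ∀ᵐ ω ∂μ, ∀ᶠ n in atTop, bernoulliStd (polarOrbit ω x n) ≤ ρ ^ n := by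
  have hρ0 : 0 < ρ := lt_of_le_of_lt (by positivity) hρ
  have hbound (n : ℕ) : (√3 / 2) ^ n * bernoulliStd x / ρ ^ n
      = bernoulliStd x * (√3 / 2 / ρ) ^ n := by
    simp only [div_pow]; ring
  have hsummable : Summable fun n : ℕ => bernoulliStd x * (√3 / 2 / ρ) ^ n :=
    (summable_geometric_of_lt_one (by positivity) ((div_lt_one hρ0).2 hρ)).mul_left _
  have htsum : ∑' n, μ {ω | ρ ^ n < bernoulliStd (polarOrbit ω x n)} ≠ ⊤ := by
    refine ne_top_of_le_ne_top ?_ (ENNReal.tsum_le_tsum fun n =>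
      hμ.measure_lt_bernoulliStd_polarOrbit_le hx n (pow_pos hρ0 n))
    simp only [hbound]
    rw [← ENNReal.ofReal_tsum_of_nonneg
      (fun n => mul_nonneg (bernoulliStd_nonneg x) (by positivity)) hsummable]
    exact ENNReal.ofReal_ne_top
  filter_upwards [ae_eventually_notMem htsum] with ω hω
  filter_upwards [hω] with n hn using not_lt.1 hn

end IsFairCoin

lemma exists_tendsto_polarOrbit_of_summable (ω : ℕ → Bool) {x : ℝ} (hx : x ∈ Set.Icc 0 1)
    (hsum : Summable fun n => polarOrbit ω x n * (1 - polarOrbit ω x n)) :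
    ∃ L, Tendsto (polarOrbit ω x) atTop (nhds L) ∧ (L = 0 ∨ L = 1) := by
  set u := polarOrbit ω x
  have hdist (n : ℕ) : dist (u n) (u (n + 1)) = u n * (1 - u n) := by
    rw [dist_comm, Real.dist_eq]
    exact abs_polarStep_sub (polarOrbit_mem_Icc ω hx n) (ω n)
  obtain ⟨L, hL⟩ := cauchySeq_tendsto_of_complete
    (cauchySeq_of_summable_dist (hsum.congr fun n => (hdist n).symm))
  refine ⟨L, hL, ?_⟩
  have hfix : L * (1 - L) = 0 :=
    tendsto_nhds_unique (hL.mul (tendsto_const_nhds.sub hL)) hsum.tendsto_atTop_zero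
  rcases mul_eq_zero.1 hfix with h | h
  · exact Or.inl h
  · exact Or.inr (by linarith)

lemma IsFairCoin.ae_exists_tendsto_polarOrbit {μ : Measure (ℕ → Bool)} (hμ : IsFairCoin μ)
    {x : ℝ} (hx : x ∈ Set.Icc 0 1) :
    ∀ᵐ ω ∂μ, ∃ L, Tendsto (polarOrbit ω x) atTop (nhds L) ∧ (L = 0 ∨ L = 1) := by
  have hsqrt3 : √3 < 9 / 5 := (Real.sqrt_lt' (by norm_num)).2 (by norm_num)
  have hρ : √3 / 2 < 9 / 10 := by linarith
  filter_upwards [hμ.ae_eventually_bernoulliStd_polarOrbit_le hx hρ] with ω hω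
  refine exists_tendsto_polarOrbit_of_summable ω hx <| Summable.of_norm_bounded_eventually_nat
    (summable_geometric_of_lt_one (r := (9 / 10) ^ 2) (by norm_num) (by norm_num)) ?_
  filter_upwards [hω] with n hn
  have hmem := polarOrbit_mem_Icc ω hx n
  rw [Real.norm_eq_abs, abs_of_nonneg (mul_nonneg hmem.1 (by linarith [hmem.2])),
    ← sq_bernoulliStd hmem, ← pow_mul, mul_comm, pow_mul]
  exact pow_le_pow_left₀ (bernoulliStd_nonneg _) hn 2

section TailSums

variable {m : ℕ} {ε : ℕ → ℝ} {ω : ℕ → Bool} {n : ℕ}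

lemma sum_Icc_mem_Icc_zero_one (hε : ∀ r ≤ m, 0 ≤ ε r)
    (hsum : ∑ r ∈ range (m + 1), ε r = 1) (r : ℕ) : ∑ t ∈ Icc r m, ε t ∈ Set.Icc 0 1 := by
  refine ⟨sum_nonneg fun t ht => hε t (mem_Icc.1 ht).2, hsum ▸ ?_⟩
  refine sum_le_sum_of_subset_of_nonneg (fun t ht => ?_) fun t ht _ => hε t ?_
  · exact mem_range.2 (Nat.lt_succ_of_le (mem_Icc.1 ht).2)
  · exact Nat.le_of_lt_succ (mem_range.1 ht)

/-- On `−`, `E_{r,n+1} = T_r² - T_{r+1}²` where `T_r = ∑_{t=r}^m E_{t,n}`. -/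
lemma sum_Icc_Eproc_succ_of_false (h : ω n = false) {r : ℕ} (hr : r ≤ m + 1) :
    ∑ t ∈ Icc r m, Eproc m ε (n + 1) ω t = (∑ t ∈ Icc r m, Eproc m ε n ω t) ^ 2 := by
  induction hr using Nat.decreasingInduction with
  | self => simp
  | of_succ r hr ih =>
    rw [← add_sum_Ioc_eq_sum_Icc (by omega), ← add_sum_Ioc_eq_sum_Icc (by omega),
      ← Icc_add_one_left_eq_Ioc, ih]
    simp only [Eproc, h, if_true]
    ring

/-- On `+`, `E_{r,n+1} = H_{r+1}² - H_r²` where `H_r = ∑_{t<r} E_{t,n}`. -/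
lemma sum_range_Eproc_succ_of_true (h : ω n = true) (r : ℕ) :
    ∑ t ∈ range r, Eproc m ε (n + 1) ω t = (∑ t ∈ range r, Eproc m ε n ω t) ^ 2 := by
  induction r with
  | zero => simp
  | succ r ih =>
    rw [sum_range_succ, sum_range_succ, ih]
    simp only [Eproc, h, Bool.true_eq_false, if_false]
    ring

lemma sum_range_Eproc (hsum : ∑ r ∈ range (m + 1), ε r = 1) (ω : ℕ → Bool) (n : ℕ) :
    ∑ t ∈ range (m + 1), Eproc m ε n ω t = 1 := by
  induction n with
  | zero => exact hsum
  | succ n ih =>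
    cases h : ω n
    · rw [range_eq_Ico, Ico_add_one_right_eq_Icc] at ih ⊢
      rw [sum_Icc_Eproc_succ_of_false h (by omega), ih, one_pow]
    · rw [sum_range_Eproc_succ_of_true h, ih, one_pow]

lemma sum_range_add_sum_Icc_Eproc (hsum : ∑ r ∈ range (m + 1), ε r = 1) (ω : ℕ → Bool)
    (n : ℕ) {r : ℕ} (hr : r ≤ m + 1) :
    ∑ t ∈ range r, Eproc m ε n ω t + ∑ t ∈ Icc r m, Eproc m ε n ω t = 1 := by
  rw [← Ico_add_one_right_eq_Icc, sum_range_add_sum_Ico _ hr, sum_range_Eproc hsum]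

lemma sum_Icc_Eproc_eq_polarOrbit (hsum : ∑ r ∈ range (m + 1), ε r = 1) (ω : ℕ → Bool)
    {r : ℕ} (hr : r ≤ m + 1) (n : ℕ) :
    ∑ t ∈ Icc r m, Eproc m ε n ω t = polarOrbit ω (∑ t ∈ Icc r m, ε t) n := by
  induction n with
  | zero => rfl
  | succ n ih =>
    rw [polarOrbit, ← ih]
    cases h : ω n
    · exact sum_Icc_Eproc_succ_of_false h hr
    · have hhead := sum_range_Eproc_succ_of_true (m := m) (ε := ε) h r
      have hsplit := sum_range_add_sum_Icc_Eproc hsum ω n hr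
      have hsplit' := sum_range_add_sum_Icc_Eproc hsum ω (n + 1) hr
      set H := ∑ t ∈ range r, Eproc m ε n ω t
      set T := ∑ t ∈ Icc r m, Eproc m ε n ω t
      rw [polarStep]
      linear_combination hsplit' - hhead - (1 - T + H) * hsplit

lemma Eproc_nonneg (hε : ∀ r ≤ m, 0 ≤ ε r) (ω : ℕ → Bool) (n : ℕ) {r : ℕ} (hr : r ≤ m) :
    0 ≤ Eproc m ε n ω r := by
  induction n generalizing r with
  | zero => exact hε r hr
  | succ n ih =>
    rw [Eproc]
    split_ifs <;> refine mul_nonneg (ih hr) (add_nonneg (ih hr)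
      (mul_nonneg zero_le_two (sum_nonneg fun t ht => ih ?_)))
    · exact (mem_Icc.1 ht).2
    · linarith [mem_range.1 ht]

lemma Eproc_eq_sum_Icc_sub (ω : ℕ → Bool) (n : ℕ) {r : ℕ} (hr : r ≤ m) :
    Eproc m ε n ω r = ∑ t ∈ Icc r m, Eproc m ε n ω t - ∑ t ∈ Icc (r + 1) m, Eproc m ε n ω t := by
  rw [← add_sum_Ioc_eq_sum_Icc hr, Icc_add_one_left_eq_Ioc]
  ring

end TailSums

theorem stmt_16_general (m : ℕ)
    (ε : ℕ → ℝ) (hε : ∀ r ≤ m, 0 ≤ ε r) (hsum : ∑ r ∈ Finset.range (m + 1), ε r = 1)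
    (μ : Measure (ℕ → Bool))
    (hμ : ∀ (s : Finset ℕ) (f : ℕ → Bool),
      μ {ω | ∀ n ∈ s, ω n = f n} = (1 / 2 : ENNReal) ^ s.card) :
    ∀ᵐ ω ∂μ, ∀ r ≤ m, ∃ L : ℝ,
      Tendsto (fun n => Eproc m ε n ω r) atTop (nhds L) ∧ (L = 0 ∨ L = 1) := by
  have htails : ∀ᵐ ω ∂μ, ∀ r ∈ Set.Iic (m + 1), ∃ L : ℝ,
      Tendsto (fun n => ∑ t ∈ Icc r m, Eproc m ε n ω t) atTop (nhds L) ∧ (L = 0 ∨ L = 1) := by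
    refine (eventually_all_finite (Set.finite_Iic _)).2 fun r hr => ?_
    filter_upwards [IsFairCoin.ae_exists_tendsto_polarOrbit hμ (sum_Icc_mem_Icc_zero_one hε hsum r)]
      with ω hω
    simpa only [sum_Icc_Eproc_eq_polarOrbit hsum ω hr] using hω
  filter_upwards [htails] with ω hω r hr
  obtain ⟨L, hL, hL01⟩ := hω r (by simp only [Set.mem_Iic]; omega)
  obtain ⟨L', hL', hL'01⟩ := hω (r + 1) (by simp only [Set.mem_Iic]; omega)
  refine ⟨L - L', by simpa only [← Eproc_eq_sum_Icc_sub ω _ hr] using hL.sub hL', ?_⟩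
  have hle : L' ≤ L := le_of_tendsto_of_tendsto' hL' hL fun n => by
    linarith [Eproc_nonneg hε ω n hr, Eproc_eq_sum_Icc_sub (ε := ε) ω n hr]
  rcases hL01 with rfl | rfl <;> rcases hL'01 with rfl | rfl
  · exact Or.inl (sub_zero 0)
  · norm_num at hle
  · exact Or.inr (sub_zero 1)
  · exact Or.inl (sub_self 1)

/-- Under the fair-coin product measure `μ` on `Ω = ℕ → Bool` (characterized by its values on
cylinder sets), for `μ`-almost every `ω` and every `0 ≤ r ≤ m`, the sequence
`(E_{r,n}(ω))_n` converges and its limit is `0` or `1`. -/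
theorem stmt_16 (p m : ℕ) (hp : p.Prime) (hm : 1 ≤ m)
    (ε : ℕ → ℝ) (hε : ∀ r ≤ m, 0 ≤ ε r) (hsum : ∑ r ∈ Finset.range (m + 1), ε r = 1)
    (μ : Measure (ℕ → Bool)) [IsProbabilityMeasure μ]
    (hμ : ∀ (s : Finset ℕ) (f : ℕ → Bool),
      μ {ω | ∀ n ∈ s, ω n = f n} = (1 / 2 : ENNReal) ^ s.card) :
    ∀ᵐ ω ∂μ, ∀ r ≤ m, ∃ L : ℝ,
      Tendsto (fun n => Eproc m ε n ω r) atTop (nhds L) ∧ (L = 0 ∨ L = 1) :=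
  stmt_16_general m ε hε hsum μ hμ
end
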